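/- Let G be a digraph whose underlying undirected graph is connected, let r be a vertex of G, and let L_0, L_1, …, L_t be the level decomposition of G from r (which partitions the vertex set). Then there exists a spanning tree T of the underlying undirected graph of G, rooted at r, with the following property: for every vertex x, the restriction of the (undirected) path in T from r to x to any single level L_i is traversed consecutively and forms a single directed path of G. Consequently, for each 1 ≤ i ≤ t, the restriction of any root-to-vertex path of T to G_i = L_{i−1} ∪ L_i is a concatenation of at most two directed paths of G. -/

import Mathlib

/-!
Call `b` a level step from `a` if the level of `b` is at least that of `a`, and `E a b` holds
when this level is even, `E b a` when it is odd. Each level `L_{i+1}` is created by forward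
(even `i + 1`) or backward (odd `i + 1`) reachability from `L_0 ∪ ⋯ ∪ L_i`, so, by induction on
the level, every vertex is reached from `r` by a path of level steps. Breadth-first parents
for this relation span a tree of the underlying graph, and the root paths of that tree are
chains of level steps: along them levels never decrease, so each level is met in one
consecutive block, and inside the block all steps follow `E` in the direction fixed by the
parity of the level.
-/

/-- Auxiliary definition for the level decomposition: `(levelsPair E r i).1` is the level
`L_i` and `(levelsPair E r i).2` is the union `L_0 ∪ ⋯ ∪ L_i`.  Level `L_0` consists of all
vertices reachable from `r`; for `i ≥ 1`, an even level `L_i` consists of the new vertices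
reachable from the previous levels, and an odd level `L_i` consists of the new vertices from
which some vertex of the previous levels is reachable. -/
def levelsPair {V : Type*} (E : V → V → Prop) (r : V) : ℕ → Set V × Set V
  | 0 => ({v | Relation.ReflTransGen E r v}, {v | Relation.ReflTransGen E r v})
  | i + 1 =>
      let U := (levelsPair E r i).2
      let L : Set V := {v | v ∉ U ∧ ∃ u ∈ U,
        if (i + 1) % 2 = 0 then Relation.ReflTransGen E u v else Relation.ReflTransGen E v u}
      (L, U ∪ L)

/-- The level decomposition `L_0, L_1, L_2, …` of the digraph `E` from the vertex `r`. -/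
def levels {V : Type*} (E : V → V → Prop) (r : V) (i : ℕ) : Set V := (levelsPair E r i).1

open Relation

theorem Relation.exists_parent_of_forall_reflTransGen {α : Type*} {R : α → α → Prop} {r : α}
    (h : ∀ v, ReflTransGen R r v) :
    ∃ (par : α → α) (rank : α → ℕ), ∀ v ≠ r, R (par v) v ∧ rank (par v) < rank v := by
  classical
  let step : Set α → Set α := fun S => S ∪ {v | ∃ u ∈ S, R u v}
  have hreach : ∀ v, ∃ n, v ∈ step^[n] {r} := by
    intro v
    induction h v with
    | refl => exact ⟨0, rfl⟩
    | tail _ huv ih =>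
      obtain ⟨n, hn⟩ := ih
      exact ⟨n + 1, by rw [Function.iterate_succ_apply']; exact Or.inr ⟨_, hn, huv⟩⟩
  have hpar : ∀ v ≠ r, ∃ u, R u v ∧ Nat.find (hreach u) < Nat.find (hreach v) := by
    intro v hv
    have hspec := Nat.find_spec (hreach v)
    obtain ⟨n, hn⟩ : ∃ n, Nat.find (hreach v) = n + 1 :=
      Nat.exists_eq_succ_of_ne_zero fun h0 => hv (by rwa [h0] at hspec)
    rw [hn, Function.iterate_succ_apply'] at hspec
    rcases hspec with hv' | ⟨u, hu, huv⟩
    · have := Nat.find_min' (hreach v) hv'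
      omega
    · exact ⟨u, huv, (Nat.find_min' _ hu).trans_lt (by omega)⟩
  choose! par hpar using hpar
  exact ⟨par, fun v => Nat.find (hreach v), hpar⟩

namespace SimpleGraph

variable {V : Type*} {r : V} {par : V → V}

def parentGraph (r : V) (par : V → V) : SimpleGraph V :=
  fromRel fun v w => v ≠ r ∧ par v = w

theorem parentGraph_adj {v w : V} :
    (parentGraph r par).Adj v w ↔ v ≠ w ∧ (v ≠ r ∧ par v = w ∨ w ≠ r ∧ par w = v) :=
  fromRel_adj _ v w

theorem parentGraph_le {G : SimpleGraph V} (h : ∀ v ≠ r, par v ≠ v → G.Adj (par v) v) :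
    parentGraph r par ≤ G := by
  intro v w hvw
  rcases parentGraph_adj.1 hvw with ⟨hne, ⟨hv, rfl⟩ | ⟨hw, rfl⟩⟩
  · exact (h v hv (Ne.symm hne)).symm
  · exact h w hw hne

theorem Walk.IsPath.isChain_parent {v x : V} {w : (parentGraph r par).Walk v x} (hw : w.IsPath)
    (hv : v ≠ r → par v ∉ w.support) : w.support.IsChain fun a b => b ≠ r ∧ par b = a := by
  induction w with
  | nil => exact List.isChain_singleton _
  | @cons u y z hadj q ih =>
    obtain ⟨hq, hu⟩ := (Walk.cons_isPath_iff hadj q).1 hw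
    have hlink : y ≠ r ∧ par y = u := by
      rcases parentGraph_adj.1 hadj with ⟨-, ⟨hur, rfl⟩ | hyu⟩
      · exact absurd (by simp) (hv hur)
      · exact hyu
    have hq' := ih hq fun _ => hlink.2 ▸ hu
    rw [Walk.support_cons, ← q.cons_tail_support]
    rw [← q.cons_tail_support] at hq'
    exact List.IsChain.cons_cons hlink hq'

variable (rank : V → ℕ) (hrank : ∀ v ≠ r, rank (par v) < rank v)
include hrank

theorem parentGraph_reachable (v : V) : (parentGraph r par).Reachable v r := by
  induction v using (measure rank).wf.induction with
  | _ v ih =>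
    by_cases hv : v = r
    · exact hv ▸ Reachable.refl _
    · have hadj : (parentGraph r par).Adj v (par v) :=
        parentGraph_adj.2 ⟨fun h => (hrank v hv).ne (h ▸ rfl), .inl ⟨hv, rfl⟩⟩
      exact hadj.reachable.trans (ih _ (hrank v hv))

theorem parent_eq_of_adj_of_rank_le {v w : V} (hvw : (parentGraph r par).Adj v w)
    (hle : rank w ≤ rank v) : par v = w := by
  rcases parentGraph_adj.1 hvw with ⟨-, ⟨-, h⟩ | ⟨hw, rfl⟩⟩
  · exact h
  · exact absurd hle (hrank w hw).not_ge

theorem parentGraph_isAcyclic : (parentGraph r par).IsAcyclic := by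
  classical
  intro u c hc
  obtain ⟨x, hx, hmax⟩ := c.support.toFinset.exists_max_image rank ⟨u, by simp⟩
  rw [List.mem_toFinset] at hx
  simp only [List.mem_toFinset] at hmax
  -- The two neighbours of a vertex of maximal rank on the cycle are both its parent.
  set c' := c.rotate x hx
  have hc' : c'.IsCycle := hc.rotate hx
  have hsnd : par x = c'.snd := parent_eq_of_adj_of_rank_le rank hrank (c'.adj_snd hc'.not_nil)
    (hmax _ ((c.mem_support_rotate_iff x hx).1 (List.mem_of_mem_tail
      (Walk.snd_mem_tail_support hc'.not_nil))))
  have hpen : par x = c'.penultimate := parent_eq_of_adj_of_rank_le rank hrank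
    (c'.adj_penultimate hc'.not_nil).symm
    (hmax _ ((c.mem_support_rotate_iff x hx).1 (List.mem_of_mem_dropLast
      (Walk.penultimate_mem_dropLast_support hc'.not_nil))))
  exact hc'.snd_ne_penultimate (hsnd.symm.trans hpen)

theorem parentGraph_isTree : (parentGraph r par).IsTree :=
  ⟨(connected_iff_exists_forall_reachable _).2
      ⟨r, fun v => (parentGraph_reachable rank hrank v).symm⟩,
    parentGraph_isAcyclic rank hrank⟩

end SimpleGraph

theorem List.Pairwise.exists_append_of_imp {α : Type*} {R : α → α → Prop} {p : α → Prop}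
    (hp : ∀ a b, R a b → p b → p a) :
    ∀ {l : List α}, l.Pairwise R → ∃ l₁ l₂, l = l₁ ++ l₂ ∧ (∀ a ∈ l₁, p a) ∧ ∀ a ∈ l₂, ¬ p a
  | [], _ => ⟨[], [], rfl, by simp, by simp⟩
  | a :: l, hl => by
    rw [List.pairwise_cons] at hl
    by_cases ha : p a
    · obtain ⟨l₁, l₂, rfl, h₁, h₂⟩ := hl.2.exists_append_of_imp hp
      exact ⟨a :: l₁, l₂, rfl, by simpa [ha] using h₁, h₂⟩
    · exact ⟨[], a :: l, rfl, by simp, by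
        simpa [ha] using fun b hb hpb => ha (hp a b (hl.1 b hb) hpb)⟩

theorem List.Pairwise.exists_append_lt_eq_gt {α β : Type*} [LinearOrder β] {f : α → β}
    {l : List α} (hl : l.Pairwise fun a b => f a ≤ f b) (i : β) :
    ∃ l₁ l₂ l₃, l = l₁ ++ l₂ ++ l₃ ∧ (∀ a ∈ l₁, f a < i) ∧ (∀ a ∈ l₂, f a = i) ∧
      ∀ a ∈ l₃, i < f a := by
  obtain ⟨l₁, m, rfl, h₁, hm⟩ :=
    hl.exists_append_of_imp (p := (f · < i)) fun a b hab hb => hab.trans_lt hb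
  obtain ⟨l₂, l₃, rfl, h₂, h₃⟩ := (List.pairwise_append.1 hl).2.1.exists_append_of_imp
    (p := (f · ≤ i)) fun a b hab hb => hab.trans hb
  refine ⟨l₁, l₂, l₃, by rw [List.append_assoc], h₁, fun a ha => ?_, fun a ha => ?_⟩
  · exact le_antisymm (h₂ a ha) (not_lt.1 (hm a (by simp [ha])))
  · exact not_le.1 (h₃ a ha)

section LevelDecomposition

variable {V : Type*} {E : V → V → Prop} {r : V} {u v : V} {i j : ℕ}

def levelsUpTo (E : V → V → Prop) (r : V) (i : ℕ) : Set V := (levelsPair E r i).2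

theorem levelsUpTo_succ : levelsUpTo E r (i + 1) = levelsUpTo E r i ∪ levels E r (i + 1) := rfl

theorem mem_levels_succ : v ∈ levels E r (i + 1) ↔ v ∉ levelsUpTo E r i ∧
    ∃ u ∈ levelsUpTo E r i,
      if (i + 1) % 2 = 0 then ReflTransGen E u v else ReflTransGen E v u := Iff.rfl

theorem levelsUpTo_mono : Monotone (levelsUpTo E r) :=
  monotone_nat_of_le_succ fun _ => Set.subset_union_left

theorem levels_subset_levelsUpTo : levels E r i ⊆ levelsUpTo E r i := by
  cases i with
  | zero => exact subset_rfl
  | succ i => exact Set.subset_union_right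

theorem mem_levelsUpTo_iff : v ∈ levelsUpTo E r i ↔ ∃ j ≤ i, v ∈ levels E r j := by
  refine ⟨fun hv => ?_, fun ⟨j, hji, hv⟩ => levelsUpTo_mono hji (levels_subset_levelsUpTo hv)⟩
  induction i with
  | zero => exact ⟨0, le_rfl, hv⟩
  | succ i ih =>
    rcases levelsUpTo_succ ▸ hv with hv | hv
    · obtain ⟨j, hji, hj⟩ := ih hv
      exact ⟨j, hji.trans i.le_succ, hj⟩
    · exact ⟨i + 1, le_rfl, hv⟩

theorem eq_of_mem_levels (hi : v ∈ levels E r i) (hj : v ∈ levels E r j) : i = j := by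
  suffices ∀ {i j}, i < j → v ∈ levels E r i → v ∉ levels E r j by
    rcases lt_trichotomy i j with h | h | h
    exacts [absurd hj (this h hi), h, absurd hi (this h hj)]
  intro i j hij hi hj
  obtain ⟨j, rfl⟩ := Nat.exists_eq_add_of_lt hij
  exact (mem_levels_succ.1 hj).1 (mem_levelsUpTo_iff.2 ⟨i, by omega, hi⟩)

theorem mem_levelsUpTo_succ_of_even (hu : u ∈ levelsUpTo E r i) (huv : ReflTransGen E u v)
    (hi : (i + 1) % 2 = 0) : v ∈ levelsUpTo E r (i + 1) := by
  rw [levelsUpTo_succ]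
  by_cases hv : v ∈ levelsUpTo E r i
  · exact Or.inl hv
  · exact Or.inr (mem_levels_succ.2 ⟨hv, u, hu, by rwa [if_pos hi]⟩)

theorem mem_levelsUpTo_succ_of_odd (hu : u ∈ levelsUpTo E r i) (hvu : ReflTransGen E v u)
    (hi : (i + 1) % 2 = 1) : v ∈ levelsUpTo E r (i + 1) := by
  rw [levelsUpTo_succ]
  by_cases hv : v ∈ levelsUpTo E r i
  · exact Or.inl hv
  · exact Or.inr (mem_levels_succ.2 ⟨hv, u, hu, by rwa [if_neg (by omega)]⟩)

theorem exists_mem_levels {G : SimpleGraph V} (hG : ∀ a b, G.Adj a b → E a b ∨ E b a)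
    (hconn : G.Preconnected) (v : V) : ∃ i, v ∈ levels E r i := by
  suffices ∃ i, v ∈ levelsUpTo E r i by
    obtain ⟨i, hi⟩ := this
    obtain ⟨j, -, hj⟩ := mem_levelsUpTo_iff.1 hi
    exact ⟨j, hj⟩
  by_contra hv
  obtain ⟨d, -, ⟨i, hi⟩, hd⟩ := (hconn r v).some.exists_boundary_dart
    {x | ∃ i, x ∈ levelsUpTo E r i} ⟨0, ReflTransGen.refl⟩ hv
  -- An arc leaving `L_0 ∪ ⋯ ∪ L_i` is absorbed by the next level of the matching parity.
  rcases hG _ _ d.adj with h | h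
  · exact hd ⟨2 * i + 1 + 1, mem_levelsUpTo_succ_of_even (levelsUpTo_mono (by omega) hi)
      (.single h) (by omega)⟩
  · exact hd ⟨2 * i + 1, mem_levelsUpTo_succ_of_odd (levelsUpTo_mono (by omega) hi)
      (.single h) (by omega)⟩

noncomputable def levelIndex (E : V → V → Prop) (r : V) (v : V) : ℕ :=
  sInf {i | v ∈ levels E r i}

theorem levelIndex_eq_iff (hv : ∃ i, v ∈ levels E r i) :
    levelIndex E r v = i ↔ v ∈ levels E r i :=
  ⟨fun h => h ▸ Nat.sInf_mem hv, eq_of_mem_levels (Nat.sInf_mem hv)⟩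

theorem levelIndex_le_iff (hv : ∃ i, v ∈ levels E r i) :
    levelIndex E r v ≤ i ↔ v ∈ levelsUpTo E r i := by
  simp only [mem_levelsUpTo_iff, ← levelIndex_eq_iff hv, exists_eq_right']

def LevelStep (E : V → V → Prop) (r : V) (a b : V) : Prop :=
  levelIndex E r a ≤ levelIndex E r b ∧
    if levelIndex E r b % 2 = 0 then E a b else E b a

theorem LevelStep.or {a b : V} (h : LevelStep E r a b) : E a b ∨ E b a := by
  obtain ⟨-, h⟩ := h
  split_ifs at h
  exacts [.inl h, .inr h]

theorem reflTransGen_levelStep_of_even {k : ℕ} (hk : k % 2 = 0)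
    (hlow : ∀ x, levelIndex E r x < k → ReflTransGen (LevelStep E r) r x)
    (hu : ReflTransGen (LevelStep E r) r u) (huv : ReflTransGen E u v)
    (hle : ∀ x, ReflTransGen E u x → levelIndex E r x ≤ k) :
    ReflTransGen (LevelStep E r) r v := by
  induction huv with
  | refl => exact hu
  | @tail x y hux hxy ih =>
    rcases (hle y (hux.tail hxy)).lt_or_eq with hy | hy
    · exact hlow y hy
    · exact ih.tail ⟨hy ▸ hle x hux, by rwa [if_pos (hy ▸ hk)]⟩

theorem reflTransGen_levelStep_of_odd {k : ℕ} (hk : k % 2 = 1)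
    (hlow : ∀ x, levelIndex E r x < k → ReflTransGen (LevelStep E r) r x)
    (hu : ReflTransGen (LevelStep E r) r u) (hvu : ReflTransGen E v u)
    (hle : ∀ x, ReflTransGen E x u → levelIndex E r x ≤ k) :
    ReflTransGen (LevelStep E r) r v := by
  induction hvu using ReflTransGen.head_induction_on with
  | refl => exact hu
  | @head x y hxy hyu ih =>
    rcases (hle x (.head hxy hyu)).lt_or_eq with hx | hx
    · exact hlow x hx
    · exact ih.tail ⟨hx ▸ hle y hyu, by rwa [if_neg (by omega)]⟩

theorem reflTransGen_levelStep (hcov : ∀ v, ∃ i, v ∈ levels E r i) (v : V) :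
    ReflTransGen (LevelStep E r) r v := by
  induction hk : levelIndex E r v using Nat.strong_induction_on generalizing v with
  | _ k ih =>
    have hlow : ∀ x, levelIndex E r x < k → ReflTransGen (LevelStep E r) r x :=
      fun x hx => ih _ hx x rfl
    rcases k with _ | k
    · exact reflTransGen_levelStep_of_even rfl hlow .refl ((levelIndex_eq_iff (hcov _)).1 hk)
        fun x hx => ((levelIndex_eq_iff (hcov _)).2 hx).le
    obtain ⟨-, u, hu, huv⟩ := mem_levels_succ.1 ((levelIndex_eq_iff (hcov _)).1 hk)
    have hu' := hlow u (Nat.lt_succ_of_le ((levelIndex_le_iff (hcov _)).2 hu))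
    split_ifs at huv with hpar
    · exact reflTransGen_levelStep_of_even hpar hlow hu' huv
        fun x hx => (levelIndex_le_iff (hcov _)).2 (mem_levelsUpTo_succ_of_even hu hx hpar)
    · exact reflTransGen_levelStep_of_odd (by omega) hlow hu' huv
        fun x hx => (levelIndex_le_iff (hcov _)).2 (mem_levelsUpTo_succ_of_odd hu hx (by omega))

end LevelDecomposition

namespace List.IsChain

variable {V : Type*} {E : V → V → Prop} {r : V} {l : List V}

theorem pairwise_levelIndex_le (hl : l.IsChain (LevelStep E r)) :
    l.Pairwise fun a b => levelIndex E r a ≤ levelIndex E r b :=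
  List.pairwise_map.1 <| List.isChain_iff_pairwise.1 <|
    (List.isChain_map _).2 (hl.imp fun _ _ h => h.1)

theorem isChain_or_isChain_flip (hl : l.IsChain (LevelStep E r)) {i : ℕ}
    (hi : ∀ a ∈ l, levelIndex E r a = i) : l.IsChain E ∨ l.IsChain (flip E) := by
  by_cases hpar : i % 2 = 0
  · refine .inl (hl.imp_of_mem_imp fun a b _ hb hab => ?_)
    simpa [hi b hb, hpar] using hab.2
  · refine .inr (hl.imp_of_mem_imp fun a b _ hb hab => ?_)
    simpa [hi b hb, hpar, flip] using hab.2

variable (hcov : ∀ v, ∃ i, v ∈ levels E r i)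
include hcov

theorem exists_eq_append_levels (hl : l.IsChain (LevelStep E r)) (i : ℕ) :
    ∃ l₁ l₂ l₃ : List V, l = l₁ ++ l₂ ++ l₃ ∧
      (∀ a ∈ l₂, a ∈ levels E r i) ∧
      (∀ a ∈ l₁, a ∉ levels E r i) ∧ (∀ a ∈ l₃, a ∉ levels E r i) ∧
      (l₂.IsChain E ∨ l₂.IsChain (flip E)) := by
  obtain ⟨l₁, l₂, l₃, rfl, h₁, h₂, h₃⟩ := hl.pairwise_levelIndex_le.exists_append_lt_eq_gt i
  simp only [← levelIndex_eq_iff (hcov _)]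
  exact ⟨l₁, l₂, l₃, rfl, h₂, fun a ha => (h₁ a ha).ne, fun a ha => (h₃ a ha).ne',
    (hl.infix ⟨l₁, l₃, rfl⟩).isChain_or_isChain_flip h₂⟩

theorem exists_eq_append_two_levels (hl : l.IsChain (LevelStep E r)) (i : ℕ) :
    ∃ l₁ l₂ l₃ l₄ : List V, l = l₁ ++ l₂ ++ l₃ ++ l₄ ∧
      (∀ a ∈ l₂ ++ l₃, a ∈ levels E r (i - 1) ∪ levels E r i) ∧
      (∀ a ∈ l₁, a ∉ levels E r (i - 1) ∪ levels E r i) ∧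
      (∀ a ∈ l₄, a ∉ levels E r (i - 1) ∪ levels E r i) ∧
      (l₂.IsChain E ∨ l₂.IsChain (flip E)) ∧ (l₃.IsChain E ∨ l₃.IsChain (flip E)) := by
  obtain ⟨l₁, m, rfl, h₁, hm⟩ := hl.pairwise_levelIndex_le.exists_append_of_imp
    (p := fun a => levelIndex E r a < i - 1) fun a b hab hb => hab.trans_lt hb
  obtain ⟨l₂, l₃, l₄, rfl, h₂, h₃, h₄⟩ :=
    hl.right_of_append.pairwise_levelIndex_le.exists_append_lt_eq_gt i
  have h₂' : ∀ a ∈ l₂, levelIndex E r a = i - 1 := fun a ha => by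
    have := hm a (by simp [ha]); have := h₂ a ha; omega
  simp only [Set.mem_union, ← levelIndex_eq_iff (hcov _), List.mem_append]
  refine ⟨l₁, l₂, l₃, l₄, by simp only [List.append_assoc], ?_, ?_, ?_,
    (hl.infix ⟨l₁, l₃ ++ l₄, by simp⟩).isChain_or_isChain_flip h₂',
    (hl.infix ⟨l₁ ++ l₂, l₄, by simp⟩).isChain_or_isChain_flip h₃⟩
  · rintro a (ha | ha)
    exacts [.inl (h₂' a ha), .inr (h₃ a ha)]
  · intro a ha; have := h₁ a ha; omega
  · intro a ha; have := h₄ a ha; have := hm a (by simp [ha]); omega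

end List.IsChain

theorem stmt9_general {V : Type} (E : V → V → Prop) (r : V)
    (UG : SimpleGraph V) (hUG : ∀ a b : V, UG.Adj a b ↔ a ≠ b ∧ (E a b ∨ E b a))
    (hconn : UG.Connected) :
    ∃ T : SimpleGraph V, T.IsTree ∧ T ≤ UG ∧
      (∀ (x : V) (w : T.Walk r x), w.IsPath → ∀ i : ℕ,
        ∃ l₁ l₂ l₃ : List V, w.support = l₁ ++ l₂ ++ l₃ ∧
          (∀ a ∈ l₂, a ∈ levels E r i) ∧
          (∀ a ∈ l₁, a ∉ levels E r i) ∧ (∀ a ∈ l₃, a ∉ levels E r i) ∧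
          (l₂.Chain' E ∨ l₂.Chain' (flip E))) ∧
      (∀ (x : V) (w : T.Walk r x), w.IsPath → ∀ i : ℕ, 1 ≤ i →
        ∃ l₁ l₂ l₃ l₄ : List V, w.support = l₁ ++ l₂ ++ l₃ ++ l₄ ∧
          (∀ a ∈ l₂ ++ l₃, a ∈ levels E r (i - 1) ∪ levels E r i) ∧
          (∀ a ∈ l₁, a ∉ levels E r (i - 1) ∪ levels E r i) ∧
          (∀ a ∈ l₄, a ∉ levels E r (i - 1) ∪ levels E r i) ∧
          (l₂.Chain' E ∨ l₂.Chain' (flip E)) ∧ (l₃.Chain' E ∨ l₃.Chain' (flip E))) := by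
  have hcov := exists_mem_levels (r := r) (fun a b h => ((hUG a b).1 h).2) hconn.preconnected
  obtain ⟨par, rank, hpar⟩ :=
    Relation.exists_parent_of_forall_reflTransGen (reflTransGen_levelStep hcov)
  have hrank : ∀ v ≠ r, rank (par v) < rank v := fun v hv => (hpar v hv).2
  have hsupport : ∀ (x : V) (w : (SimpleGraph.parentGraph r par).Walk r x), w.IsPath →
      w.support.IsChain (LevelStep E r) := fun x w hw =>
    (hw.isChain_parent fun h => absurd rfl h).imp fun a b ⟨hb, hab⟩ => hab ▸ (hpar b hb).1
  refine ⟨SimpleGraph.parentGraph r par, SimpleGraph.parentGraph_isTree rank hrank,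
    SimpleGraph.parentGraph_le fun v hv hne => (hUG _ _).2 ⟨hne, (hpar v hv).1.or⟩,
    fun x w hw i => (hsupport x w hw).exists_eq_append_levels hcov i,
    fun x w hw i _ => (hsupport x w hw).exists_eq_append_two_levels hcov i⟩

/-- For a digraph `E` with connected underlying undirected graph `UG` and any vertex `r`,
there is a spanning tree `T` of `UG` (rooted at `r`) such that along each root-to-vertex
path of `T`, the vertices belonging to any single level `L_i` of the level decomposition
from `r` appear consecutively and form a single directed path of `E` (traversed in one of
the two directions); consequently the restriction of a root path to `G_i = L_{i-1} ∪ L_i`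
is a concatenation of at most two directed paths of `E`. -/
theorem stmt9 {V : Type} [Fintype V] (E : V → V → Prop) (r : V)
    (UG : SimpleGraph V) (hUG : ∀ a b : V, UG.Adj a b ↔ a ≠ b ∧ (E a b ∨ E b a))
    (hconn : UG.Connected) :
    ∃ T : SimpleGraph V, T.IsTree ∧ T ≤ UG ∧
      (∀ (x : V) (w : T.Walk r x), w.IsPath → ∀ i : ℕ,
        ∃ l₁ l₂ l₃ : List V, w.support = l₁ ++ l₂ ++ l₃ ∧
          (∀ a ∈ l₂, a ∈ levels E r i) ∧
          (∀ a ∈ l₁, a ∉ levels E r i) ∧ (∀ a ∈ l₃, a ∉ levels E r i) ∧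
          (l₂.Chain' E ∨ l₂.Chain' (flip E))) ∧
      (∀ (x : V) (w : T.Walk r x), w.IsPath → ∀ i : ℕ, 1 ≤ i →
        ∃ l₁ l₂ l₃ l₄ : List V, w.support = l₁ ++ l₂ ++ l₃ ++ l₄ ∧
          (∀ a ∈ l₂ ++ l₃, a ∈ levels E r (i - 1) ∪ levels E r i) ∧
          (∀ a ∈ l₁, a ∉ levels E r (i - 1) ∪ levels E r i) ∧
          (∀ a ∈ l₄, a ∉ levels E r (i - 1) ∪ levels E r i) ∧
          (l₂.Chain' E ∨ l₂.Chain' (flip E)) ∧ (l₃.Chain' E ∨ l₃.Chain' (flip E))) :=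
  stmt9_general E r UG hUG hconn
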